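/- For every integer g ≥ 1 and every integer k with -1 ≤ k ≤ 3g-2, the following identity holds in the rationals: ((6g-1)!!/(24^g·g!))·b_{g,k} = Σ_{l=0}^{k+1} a_{l-1, 3g-l}. -/

import Mathlib

/-- `dfOdd n = (2n-1)!!`, so `dfOdd 0 = (-1)!! = 1`. -/
def dfOdd : ℕ → ℚ
  | 0 => 1
  | n + 1 => (2 * n + 1) * dfOdd n

/-- Double factorial `m!!` for odd integers `m ≥ -1` (value irrelevant elsewhere):
`df (2t-1) = (2t-1)!!`, with the convention `(-1)!! = 1`. -/
def df (m : ℤ) : ℚ := dfOdd ((m + 1) / 2).toNat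

/-- Factorial of an integer (`m! ` for `m ≥ 0`), as a rational number. -/
def zfact (m : ℤ) : ℚ := (Nat.factorial m.toNat : ℚ)

/-- The Bertola–Dubrovin–Yang coefficients `a_{k1,k2}`. -/
def a (k1 k2 : ℤ) : ℚ :=
  if k1 % 3 = 1 ∧ k2 % 3 = 1 ∧ 1 ≤ k1 ∧ 1 ≤ k2 then
    -- k1 = 3*g1 - 2, k2 = 3*g2 - 2 with g1, g2 ≥ 1
    let g1 := (k1 + 2) / 3;
    let g2 := (k2 + 2) / 3;
    df (6 * g1 - 5) * df (6 * g2 - 5) /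
      (2 * (24 : ℚ) ^ (g1 + g2 - 2) * zfact (g1 - 1) * zfact (g2 - 1))
  else if k1 % 3 = 0 ∧ k2 % 3 = 2 ∧ 0 ≤ k1 ∧ -1 ≤ k2 then
    -- k1 = 3*g1, k2 = 3*g2 - 1 with g1, g2 ≥ 0
    let g1 := k1 / 3;
    let g2 := (k2 + 1) / 3;
    -(df (6 * g1 - 1) * df (6 * g2 - 1) / ((24 : ℚ) ^ (g1 + g2) * zfact g1 * zfact g2)) *
      ((6 * (g2 : ℚ) + 1) / (6 * (g2 : ℚ) - 1))
  else if k1 % 3 = 2 ∧ k2 % 3 = 0 ∧ -1 ≤ k1 ∧ 0 ≤ k2 then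
    -- k1 = 3*g1 - 1, k2 = 3*g2 with g1, g2 ≥ 0
    let g1 := (k1 + 1) / 3;
    let g2 := k2 / 3;
    -(df (6 * g1 - 1) * df (6 * g2 - 1) / ((24 : ℚ) ^ (g1 + g2) * zfact g1 * zfact g2)) *
      ((6 * (g1 : ℚ) + 1) / (6 * (g1 : ℚ) - 1))
  else 0

/-- The numerator `c_{g,k}` in Zograf's coefficients. -/
def c (g k : ℤ) : ℚ :=
  if k % 3 = 2 then
    -- k = 3*j - 1
    let j := (k + 1) / 3;
    df (6 * j - 1) * zfact (g - 1) / (zfact j * zfact (g - j)) * ((g : ℚ) - 2 * (j : ℚ))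
  else if k % 3 = 0 then
    -- k = 3*j
    let j := k / 3;
    -2 * df (6 * j + 1) * zfact (g - 1) / (zfact j * zfact (g - 1 - j))
  else
    -- k = 3*j + 1
    let j := (k - 1) / 3;
    2 * df (6 * j + 3) * zfact (g - 1) / (zfact j * zfact (g - 1 - j))

/-- Zograf's coefficients `b_{g,k}`. -/
def b (g k : ℤ) : ℚ := df (6 * g - 3 - 2 * k) / df (6 * g - 1) * c g k

/-!
Let `bScaled g k` be the left-hand side. The identity says that the `a (l - 1) (3 * g - l)` are
the successive differences of `k ↦ bScaled g k`: `bScaled g (-1) = a (-1) (3 * g)` and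
`bScaled g (k + 1) = bScaled g k + a (k + 1) (3 * g - k - 2)`. Writing `g = p + q + 1` with
`k + 1 ∈ {3p, 3p + 1, 3p + 2}`, all terms are explicit in `(2n-1)!!` and `n!`; unfolding these
down to `(6p-1)!!`, `(6q-1)!!`, `p!`, `q!` and `(p+q)!` turns each difference equation into a
polynomial identity in `p` and `q`, e.g. `-2(6p+1)(q+1) = (q+1-p)(6q+5) - (6q+7)(p+q+1)` for
`k + 1 = 3p`.
-/

open scoped Nat

lemma dfOdd_pos (n : ℕ) : 0 < dfOdd n := by
  induction n with
  | zero => simp [dfOdd]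
  | succ n ih => rw [dfOdd]; positivity

lemma df_ne_zero (m : ℤ) : df m ≠ 0 := (dfOdd_pos _).ne'

lemma df_two_mul_sub_one (n : ℕ) : df (2 * n - 1) = dfOdd n := by
  simp [df]

lemma zfact_natCast (n : ℕ) : zfact n = n ! := by
  simp [zfact]

lemma a_three_mul_add_one_three_mul_add_one (p q : ℕ) :
    a (3 * p + 1) (3 * q + 1) =
      dfOdd (3 * p + 1) * dfOdd (3 * q + 1) / (2 * 24 ^ (p + q) * p ! * q !) := by
  rw [a, if_pos (by omega)]
  simp only [show (3 * p + 1 + 2 : ℤ) / 3 = p + 1 by omega,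
    show (3 * q + 1 + 2 : ℤ) / 3 = q + 1 by omega]
  rw [show (6 * (p + 1) - 5 : ℤ) = 2 * (3 * p + 1 : ℕ) - 1 by omega,
    show (6 * (q + 1) - 5 : ℤ) = 2 * (3 * q + 1 : ℕ) - 1 by omega,
    show (p + 1 + (q + 1) - 2 : ℤ) = (p + q : ℕ) by omega,
    add_sub_cancel_right, add_sub_cancel_right]
  simp only [df_two_mul_sub_one, zfact_natCast, zpow_natCast]

lemma a_three_mul_three_mul_sub_one (p q : ℕ) :
    a (3 * p) (3 * q - 1) =
      -(dfOdd (3 * p) * dfOdd (3 * q) / (24 ^ (p + q) * p ! * q !)) *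
        ((6 * q + 1) / (6 * q - 1)) := by
  rw [a, if_neg (by omega), if_pos (by omega)]
  simp only [show (3 * p : ℤ) / 3 = p by omega, show (3 * q - 1 + 1 : ℤ) / 3 = q by omega]
  rw [show (6 * p - 1 : ℤ) = 2 * (3 * p : ℕ) - 1 by omega,
    show (6 * q - 1 : ℤ) = 2 * (3 * q : ℕ) - 1 by omega, ← Nat.cast_add]
  simp only [df_two_mul_sub_one, zfact_natCast, zpow_natCast, Int.cast_natCast]

lemma a_three_mul_sub_one_three_mul (p q : ℕ) :
    a (3 * p - 1) (3 * q) =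
      -(dfOdd (3 * p) * dfOdd (3 * q) / (24 ^ (p + q) * p ! * q !)) *
        ((6 * p + 1) / (6 * p - 1)) := by
  rw [a, if_neg (by omega), if_neg (by omega), if_pos (by omega)]
  simp only [show (3 * q : ℤ) / 3 = q by omega, show (3 * p - 1 + 1 : ℤ) / 3 = p by omega]
  rw [show (6 * p - 1 : ℤ) = 2 * (3 * p : ℕ) - 1 by omega,
    show (6 * q - 1 : ℤ) = 2 * (3 * q : ℕ) - 1 by omega, ← Nat.cast_add]
  simp only [df_two_mul_sub_one, zfact_natCast, zpow_natCast, Int.cast_natCast]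

def bScaled (g k : ℤ) : ℚ := df (6 * g - 1) / (24 ^ g * zfact g) * b g k

lemma bScaled_eq (g k : ℤ) :
    bScaled g k = df (6 * g - 3 - 2 * k) * c g k / (24 ^ g * zfact g) := by
  rw [bScaled, b]
  field_simp [df_ne_zero]

lemma bScaled_three_mul_sub_one (p q : ℕ) :
    bScaled (p + q + 1) (3 * p - 1) =
      (q + 1 - p) * dfOdd (3 * p) * dfOdd (3 * q + 3) /
        (24 ^ (p + q + 1) * (p + q + 1) * p ! * (q + 1)!) := by
  rw [bScaled_eq, c, if_pos (by omega)]
  simp only [show (3 * p - 1 + 1 : ℤ) / 3 = p by omega]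
  rw [show (6 * (p + q + 1) - 3 - 2 * (3 * p - 1) : ℤ) = 2 * (3 * q + 3 : ℕ) - 1 by omega,
    show (6 * p - 1 : ℤ) = 2 * (3 * p : ℕ) - 1 by omega,
    show (p + q + 1 - 1 : ℤ) = (p + q : ℕ) by omega,
    show (p + q + 1 - p : ℤ) = (q + 1 : ℕ) by omega,
    show (p + q + 1 : ℤ) = (p + q + 1 : ℕ) by omega]
  simp only [df_two_mul_sub_one, zfact_natCast, zpow_natCast, Int.cast_natCast,
    Nat.factorial_succ (p + q)]
  push_cast
  field_simp
  ring

lemma bScaled_three_mul (p q : ℕ) :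
    bScaled (p + q + 1) (3 * p) =
      -2 * dfOdd (3 * p + 1) * dfOdd (3 * q + 2) /
        (24 ^ (p + q + 1) * (p + q + 1) * p ! * q !) := by
  rw [bScaled_eq, c, if_neg (by omega), if_pos (by omega)]
  simp only [show (3 * p : ℤ) / 3 = p by omega]
  rw [show (6 * (p + q + 1) - 3 - 2 * (3 * p) : ℤ) = 2 * (3 * q + 2 : ℕ) - 1 by omega,
    show (6 * p + 1 : ℤ) = 2 * (3 * p + 1 : ℕ) - 1 by omega,
    show (p + q + 1 - 1 - p : ℤ) = q by omega,
    show (p + q + 1 - 1 : ℤ) = (p + q : ℕ) by omega,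
    show (p + q + 1 : ℤ) = (p + q + 1 : ℕ) by omega]
  simp only [df_two_mul_sub_one, zfact_natCast, zpow_natCast, Nat.factorial_succ (p + q)]
  push_cast
  field_simp

lemma bScaled_three_mul_add_one (p q : ℕ) :
    bScaled (p + q + 1) (3 * p + 1) =
      2 * dfOdd (3 * p + 2) * dfOdd (3 * q + 1) /
        (24 ^ (p + q + 1) * (p + q + 1) * p ! * q !) := by
  rw [bScaled_eq, c, if_neg (by omega), if_neg (by omega)]
  simp only [show (3 * p + 1 - 1 : ℤ) / 3 = p by omega]
  rw [show (6 * (p + q + 1) - 3 - 2 * (3 * p + 1) : ℤ) = 2 * (3 * q + 1 : ℕ) - 1 by omega,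
    show (6 * p + 3 : ℤ) = 2 * (3 * p + 2 : ℕ) - 1 by omega,
    show (p + q + 1 - 1 - p : ℤ) = q by omega,
    show (p + q + 1 - 1 : ℤ) = (p + q : ℕ) by omega,
    show (p + q + 1 : ℤ) = (p + q + 1 : ℕ) by omega]
  simp only [df_two_mul_sub_one, zfact_natCast, zpow_natCast, Nat.factorial_succ (p + q)]
  push_cast
  field_simp

lemma bScaled_neg_one (g : ℤ) (hg : 1 ≤ g) : bScaled g (-1) = a (-1) (3 * g) := by
  obtain ⟨q, rfl⟩ : ∃ q : ℕ, g = 0 + q + 1 := ⟨(g - 1).toNat, by omega⟩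
  have hb := bScaled_three_mul_sub_one 0 q
  have ha := a_three_mul_sub_one_three_mul 0 (q + 1)
  push_cast at hb ha ⊢
  simp only [mul_zero, zero_sub, zero_add] at hb ha ⊢
  rw [hb, show 3 * ((q : ℤ) + 1) = 3 * (q + 1) by ring, ha]
  simp only [mul_add_one, dfOdd, Nat.factorial_succ]
  push_cast
  field_simp
  ring

lemma bScaled_succ_three_mul_sub_one (p q : ℕ) :
    bScaled (p + q + 1) (3 * p) =
      bScaled (p + q + 1) (3 * p - 1) + a (3 * p) (3 * (q + 1 : ℕ) - 1) := by
  rw [bScaled_three_mul, bScaled_three_mul_sub_one, a_three_mul_three_mul_sub_one]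
  simp only [mul_add_one, dfOdd, Nat.factorial_succ]
  push_cast
  rw [show 6 * ((q : ℚ) + 1) - 1 = 6 * q + 5 by ring]
  field_simp
  ring

lemma bScaled_succ_three_mul (p q : ℕ) :
    bScaled (p + q + 1) (3 * p + 1) =
      bScaled (p + q + 1) (3 * p) + a (3 * p + 1) (3 * q + 1) := by
  rw [bScaled_three_mul, bScaled_three_mul_add_one, a_three_mul_add_one_three_mul_add_one]
  simp only [dfOdd]
  push_cast
  field_simp
  ring

lemma bScaled_succ_three_mul_add_one (p q : ℕ) :
    bScaled (p + q + 2) (3 * (p + 1 : ℕ) - 1) =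
      bScaled (p + q + 2) (3 * p + 1) + a (3 * (p + 1 : ℕ) - 1) (3 * (q + 1 : ℕ)) := by
  have hb := bScaled_three_mul_sub_one (p + 1) q
  have hb' := bScaled_three_mul_add_one p (q + 1)
  rw [show ((p + 1 : ℕ) : ℤ) + q + 1 = p + q + 2 by push_cast; ring] at hb
  rw [show (p : ℤ) + (q + 1 : ℕ) + 1 = p + q + 2 by push_cast; ring] at hb'
  rw [hb, hb', a_three_mul_sub_one_three_mul]
  simp only [mul_add_one, dfOdd, Nat.factorial_succ]
  push_cast
  rw [show 6 * ((p : ℚ) + 1) - 1 = 6 * p + 5 by ring]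
  field_simp
  ring

lemma bScaled_succ (g k : ℤ) (hk : -1 ≤ k) (hk' : k ≤ 3 * g - 3) :
    bScaled g (k + 1) = bScaled g k + a (k + 1) (3 * g - k - 2) := by
  rcases (by omega : k % 3 = 2 ∨ k % 3 = 0 ∨ k % 3 = 1) with h | h | h
  · obtain ⟨p, rfl⟩ : ∃ p : ℕ, k = 3 * p - 1 := ⟨((k + 1) / 3).toNat, by omega⟩
    obtain ⟨q, rfl⟩ : ∃ q : ℕ, g = p + q + 1 := ⟨(g - p - 1).toNat, by omega⟩
    convert bScaled_succ_three_mul_sub_one p q using 3 <;> push_cast <;> ring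
  · obtain ⟨p, rfl⟩ : ∃ p : ℕ, k = 3 * p := ⟨(k / 3).toNat, by omega⟩
    obtain ⟨q, rfl⟩ : ∃ q : ℕ, g = p + q + 1 := ⟨(g - p - 1).toNat, by omega⟩
    convert bScaled_succ_three_mul p q using 3
    ring
  · obtain ⟨p, rfl⟩ : ∃ p : ℕ, k = 3 * p + 1 := ⟨((k - 1) / 3).toNat, by omega⟩
    obtain ⟨q, rfl⟩ : ∃ q : ℕ, g = p + q + 2 := ⟨(g - p - 2).toNat, by omega⟩
    convert bScaled_succ_three_mul_add_one p q using 3 <;> push_cast <;> ring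

theorem stmt2 (g k : ℤ) (hg : 1 ≤ g) (hk1 : -1 ≤ k) (hk2 : k ≤ 3 * g - 2) :
    df (6 * g - 1) / ((24 : ℚ) ^ g * zfact g) * b g k =
      ∑ l ∈ Finset.Icc (0 : ℤ) (k + 1), a (l - 1) (3 * g - l) := by
  change bScaled g k = _
  induction k, hk1 using Int.leInduction with
  | base => simpa using bScaled_neg_one g hg
  | succ k hk ih =>
    rw [bScaled_succ g k hk (by omega), ih (by omega),
      ← Finset.insert_Icc_right_eq_Icc_add_one (b := k + 1) (by omega),
      Finset.sum_insert (by simp), add_comm, show k + 1 + 1 - 1 = k + 1 by ring,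
      show 3 * g - (k + 1 + 1) = 3 * g - k - 2 by ring]
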